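/- arXiv:2002.10715 — 4 statements merged into one kernel-verified Lean document; each statement's English description precedes it below -/
import Mathlib

section
/- If the n-sphere S^n is an absolute extensor for a metric space X, then X is (n+1)-inessential: for every sequence (A_i, B_i)_{i<n+1} of disjoint pairs of closed sets in X there exist disjoint open sets U_i ⊇ A_i, V_i ⊇ B_i (i < n+1) such that the family (U_i ∪ V_i)_{i<n+1} covers X. -/
/-!
Choose Urysohn functions separating each pair `A i`, `B i` and combine them into a map `F` to
`ℝ^{n+1}` whose `i`-th coordinate is negative on `A i` and positive on `B i`. On the closed set
`P = ⋃ i, A i ∪ B i` the map `F` does not vanish, so its normalization is a map `P → Sⁿ`, which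
extends to a continuous `g : X → Sⁿ` by hypothesis. Since `g` never vanishes, the open sets
`{g i < 0}` and `{0 < g i}` cover `X`, and they contain `A i` and `B i` respectively.
-/

open Set Metric NormedSpace

def IsAbsoluteExtensorFor (K X : Type*) [TopologicalSpace K] [TopologicalSpace X] : Prop :=
  ∀ P : Set X, IsClosed P → ∀ f : X → K, ContinuousOn f P → ∃ g : X → K, Continuous g ∧ EqOn g f P

section Normalize

variable {E : Type*} [NormedAddCommGroup E] [NormedSpace ℝ E]

theorem continuousOn_normalize_comp {X : Type*} [TopologicalSpace X] {F : X → E} {P : Set X}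
    (hF : ContinuousOn F P) (hF0 : ∀ x ∈ P, F x ≠ 0) : ContinuousOn (fun x => normalize (F x)) P :=
  (hF.norm.inv₀ fun x hx => norm_ne_zero_iff.2 (hF0 x hx)).smul hF

theorem IsAbsoluteExtensorFor.exists_continuous_eqOn_normalize [Nontrivial E] {X : Type*}
    [TopologicalSpace X] (hK : IsAbsoluteExtensorFor (sphere (0 : E) 1) X) {P : Set X}
    (hP : IsClosed P) {F : X → E} (hF : ContinuousOn F P) (hF0 : ∀ x ∈ P, F x ≠ 0) :
    ∃ g : X → sphere (0 : E) 1, Continuous g ∧ ∀ x ∈ P, (g x : E) = normalize (F x) := by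
  classical
  obtain ⟨e⟩ := sphere_nonempty_rclike (𝕜 := ℝ) (E := E) zero_le_one
  -- off `P` the value is irrelevant; `e` only makes the map total
  let φ : X → sphere (0 : E) 1 := fun x =>
    if h : F x = 0 then e else ⟨normalize (F x), by simpa using norm_normalize h⟩
  have hφP : ∀ x ∈ P, (φ x : E) = normalize (F x) := fun x hx => by simp [φ, hF0 x hx]
  have hφ : ContinuousOn φ P := by
    rw [Topology.IsInducing.subtypeVal.continuousOn_iff]
    exact (continuousOn_normalize_comp hF hF0).congr hφP
  obtain ⟨g, hg, hgφ⟩ := hK P hP φ hφ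
  exact ⟨g, hg, fun x hx => by rw [hgφ hx, hφP x hx]⟩

end Normalize

theorem exists_continuous_apply_neg_pos {ι X : Type*} [TopologicalSpace X] [NormalSpace X]
    {A B : ι → Set X} (hA : ∀ i, IsClosed (A i)) (hB : ∀ i, IsClosed (B i))
    (hAB : ∀ i, Disjoint (A i) (B i)) :
    ∃ F : X → EuclideanSpace ℝ ι, Continuous F ∧
      (∀ i, ∀ x ∈ A i, F x i < 0) ∧ ∀ i, ∀ x ∈ B i, 0 < F x i := by
  choose f hfA hfB _ using fun i => exists_continuous_zero_one_of_isClosed (hA i) (hB i) (hAB i)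
  refine ⟨fun x => WithLp.toLp 2 fun i => f i x - 1 / 2, ?_, fun i x hx => ?_, fun i x hx => ?_⟩
  · exact (PiLp.continuous_toLp 2 _).comp (continuous_pi fun i => (f i).continuous.sub
      continuous_const)
  · simp [hfA i hx]
  · norm_num [hfB i hx]

section Euclidean

variable {ι : Type*} [Fintype ι]

theorem normalize_apply_neg {v : EuclideanSpace ℝ ι} {i : ι} (h : v i < 0) :
    normalize v i < 0 := by
  have hv : 0 < ‖v‖ := norm_pos_iff.2 fun hv => by simp [hv] at h
  exact mul_neg_of_pos_of_neg (inv_pos.2 hv) h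

theorem normalize_apply_pos {v : EuclideanSpace ℝ ι} {i : ι} (h : 0 < v i) :
    0 < normalize v i := by
  have hv : 0 < ‖v‖ := norm_pos_iff.2 fun hv => by simp [hv] at h
  exact mul_pos (inv_pos.2 hv) h

theorem exists_isOpen_separating_cover {X : Type*} [TopologicalSpace X]
    {g : X → EuclideanSpace ℝ ι} (hg : Continuous g) (hg0 : ∀ x, g x ≠ 0) {A B : ι → Set X}
    (hA : ∀ i, ∀ x ∈ A i, g x i < 0) (hB : ∀ i, ∀ x ∈ B i, 0 < g x i) :
    ∃ U V : ι → Set X,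
      (∀ i, IsOpen (U i)) ∧ (∀ i, IsOpen (V i)) ∧
      (∀ i, A i ⊆ U i) ∧ (∀ i, B i ⊆ V i) ∧
      (∀ i, Disjoint (U i) (V i)) ∧
      (⋃ i, U i ∪ V i) = univ := by
  have hgi : ∀ i, Continuous fun x => g x i := fun i => (PiLp.continuous_apply 2 _ i).comp hg
  refine ⟨fun i => {x | g x i < 0}, fun i => {x | 0 < g x i},
    fun i => isOpen_lt (hgi i) continuous_const, fun i => isOpen_lt continuous_const (hgi i),
    hA, hB, fun i => disjoint_left.2 fun x (hU : g x i < 0) (hV : 0 < g x i) => lt_asymm hU hV, ?_⟩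
  refine eq_univ_of_forall fun x => ?_
  obtain ⟨i, hi⟩ : ∃ i, g x i ≠ 0 := by
    by_contra! h
    exact hg0 x (PiLp.ext h)
  exact mem_iUnion.2 ⟨i, hi.lt_or_gt⟩

end Euclidean

/-- If the `n`-sphere is an absolute extensor for a metric space `X`, then `X` is
`(n+1)`-inessential. -/
theorem stmt_7 {X : Type*} [MetricSpace X] (n : ℕ)
    (hAE : ∀ P : Set X, IsClosed P →
      ∀ f : X → Metric.sphere (0 : EuclideanSpace ℝ (Fin (n + 1))) 1,
        ContinuousOn f P →
          ∃ g : X → Metric.sphere (0 : EuclideanSpace ℝ (Fin (n + 1))) 1,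
            Continuous g ∧ Set.EqOn g f P)
    (A B : Fin (n + 1) → Set X)
    (hA : ∀ i, IsClosed (A i)) (hB : ∀ i, IsClosed (B i))
    (hAB : ∀ i, Disjoint (A i) (B i)) :
    ∃ U V : Fin (n + 1) → Set X,
      (∀ i, IsOpen (U i)) ∧ (∀ i, IsOpen (V i)) ∧
      (∀ i, A i ⊆ U i) ∧ (∀ i, B i ⊆ V i) ∧
      (∀ i, Disjoint (U i) (V i)) ∧
      (⋃ i, U i ∪ V i) = Set.univ := by
  obtain ⟨F, hF, hFA, hFB⟩ := exists_continuous_apply_neg_pos hA hB hAB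
  have hP : IsClosed (⋃ i, A i ∪ B i) := isClosed_iUnion_of_finite fun i => (hA i).union (hB i)
  have hF0 : ∀ x ∈ ⋃ i, A i ∪ B i, F x ≠ 0 := by
    intro x hx hFx
    obtain ⟨i, hxA | hxB⟩ := mem_iUnion.1 hx
    · simpa [hFx] using hFA i x hxA
    · simpa [hFx] using hFB i x hxB
  obtain ⟨g, hg, hgP⟩ :=
    IsAbsoluteExtensorFor.exists_continuous_eqOn_normalize hAE hP hF.continuousOn hF0
  have hsub : ∀ i, A i ∪ B i ⊆ ⋃ j, A j ∪ B j := subset_iUnion (fun j => A j ∪ B j)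
  refine exists_isOpen_separating_cover (continuous_subtype_val.comp hg)
    (fun x => ne_zero_of_mem_unit_sphere (g x)) (fun i x hx => ?_) (fun i x hx => ?_)
  · simpa [hgP x (hsub i (Or.inl hx))] using normalize_apply_neg (hFA i x hx)
  · simpa [hgP x (hsub i (Or.inr hx))] using normalize_apply_pos (hFB i x hx)
end

section
/- If a metric space X is (n+1)-inessential, then for every open cover (U_i)_{i<n+2} of X there exists an open shrinking (W_i)_{i<n+2} of the cover with empty intersection ⋂_{i<n+2} W_i = ∅. -/
/-- If a metric space `X` is `(n+1)`-inessential, then every open cover of `X` by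
`n+2` open sets has an open shrinking with empty intersection. -/
theorem stmt_8 {X : Type*} [MetricSpace X] (n : ℕ)
    (hiness : ∀ A B : Fin (n + 1) → Set X,
      (∀ i, IsClosed (A i)) → (∀ i, IsClosed (B i)) → (∀ i, Disjoint (A i) (B i)) →
      ∃ U V : Fin (n + 1) → Set X,
        (∀ i, IsOpen (U i)) ∧ (∀ i, IsOpen (V i)) ∧
        (∀ i, A i ⊆ U i) ∧ (∀ i, B i ⊆ V i) ∧
        (∀ i, Disjoint (U i) (V i)) ∧ (⋃ i, U i ∪ V i) = Set.univ)
    (U : Fin (n + 2) → Set X)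
    (hUo : ∀ i, IsOpen (U i)) (hUc : (⋃ i, U i) = Set.univ) :
    ∃ W : Fin (n + 2) → Set X,
      (∀ i, IsOpen (W i)) ∧ (∀ i, W i ⊆ U i) ∧
      (⋃ i, W i) = Set.univ ∧ (⋂ i, W i) = ∅ := by
  -- shrink the cover to a closed cover
  obtain ⟨v, hvU, hvo, hvc⟩ := exists_iUnion_eq_closure_subset hUo
    (fun x => Set.toFinite _) hUc
  set F : Fin (n + 2) → Set X := fun i => closure (v i) with hF
  have hFc : ∀ i, F i ⊆ U i := hvc
  have hFcov : (⋃ i, F i) = Set.univ := by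
    apply Set.eq_univ_of_univ_subset
    rw [← hvU]
    exact Set.iUnion_mono fun i => subset_closure
  -- apply inessentiality to pairs (F i, (U i)ᶜ) for i < n+1
  obtain ⟨G, H, hGo, hHo, hAG, hBH, hGH, hcov⟩ := hiness
    (fun i => F i.castSucc) (fun i => (U i.castSucc)ᶜ)
    (fun i => isClosed_closure) (fun i => (hUo _).isClosed_compl)
    (fun i => Set.disjoint_compl_right_iff_subset.mpr (hFc _))
  -- G i ⊆ U i.castSucc
  have hGU : ∀ i, G i ⊆ U i.castSucc := fun i x hx => by
    by_contra hxU
    exact Set.disjoint_left.mp (hGH i) hx (hBH i hxU)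
  refine ⟨Fin.lastCases (U (Fin.last (n + 1)) ∩ ⋃ i, H i) G, ?_, ?_, ?_, ?_⟩
  · intro j
    induction j using Fin.lastCases with
    | last => simpa using ((hUo _).inter (isOpen_iUnion hHo))
    | cast i => simpa using hGo i
  · intro j
    induction j using Fin.lastCases with
    | last => simp only [Fin.lastCases_last]; exact Set.inter_subset_left
    | cast i => simpa using hGU i
  · apply Set.eq_univ_of_forall
    intro x
    rcases Set.mem_iUnion.mp (hcov ▸ Set.mem_univ x : x ∈ ⋃ i, G i ∪ H i) with ⟨i, hi⟩
    rcases hi with hG | hH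
    · exact Set.mem_iUnion.mpr ⟨i.castSucc, by simpa using hG⟩
    · by_cases hGx : ∃ j, x ∈ G j
      · obtain ⟨j, hj⟩ := hGx
        exact Set.mem_iUnion.mpr ⟨j.castSucc, by simpa using hj⟩
      · push_neg at hGx
        -- x is in some F j; j must be last
        rcases Set.mem_iUnion.mp (hFcov ▸ Set.mem_univ x : x ∈ ⋃ i, F i) with ⟨j, hj⟩
        induction j using Fin.lastCases with
        | last =>
          refine Set.mem_iUnion.mpr ⟨Fin.last (n + 1), ?_⟩
          simp only [Fin.lastCases_last]
          exact ⟨hFc _ hj, Set.mem_iUnion.mpr ⟨i, hH⟩⟩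
        | cast k => exact absurd (hAG k hj) (hGx k)
  · apply Set.eq_empty_iff_forall_notMem.mpr
    intro x hx
    have hlast := Set.mem_iInter.mp hx (Fin.last (n + 1))
    simp only [Fin.lastCases_last] at hlast
    rcases Set.mem_iUnion.mp hlast.2 with ⟨i, hHi⟩
    have hGi := Set.mem_iInter.mp hx i.castSucc
    simp only [Fin.lastCases_castSucc] at hGi
    exact Set.disjoint_left.mp (hGH i) hGi hHi
end

section
/- If a metric space X is (n+1)-inessential, then the covering dimension of X is at most n: every finite open cover of X has a finite open refinement of order at most n. -/
open Set

/-- From `(n+1)`-inessentiality: every open cover by `n+2` sets has an open shrinking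
with empty total intersection. -/
private lemma shrink_n2 {X : Type*} [MetricSpace X] (n : ℕ)
    (hiness : ∀ A B : Fin (n + 1) → Set X,
      (∀ i, IsClosed (A i)) → (∀ i, IsClosed (B i)) → (∀ i, Disjoint (A i) (B i)) →
      ∃ U V : Fin (n + 1) → Set X,
        (∀ i, IsOpen (U i)) ∧ (∀ i, IsOpen (V i)) ∧
        (∀ i, A i ⊆ U i) ∧ (∀ i, B i ⊆ V i) ∧
        (∀ i, Disjoint (U i) (V i)) ∧ (⋃ i, U i ∪ V i) = Set.univ)
    (C : Fin (n + 2) → Set X) (hCo : ∀ t, IsOpen (C t)) (hCc : (⋃ t, C t) = Set.univ) :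
    ∃ G : Fin (n + 2) → Set X, (∀ t, IsOpen (G t)) ∧ (∀ t, G t ⊆ C t) ∧
      (⋃ t, G t) = Set.univ ∧ (⋂ t, G t) = ∅ := by
  obtain ⟨F₀, hF₀c, hF₀o, hF₀sub⟩ := exists_subset_iUnion_closure_subset isClosed_univ hCo
    (fun x _ => Set.toFinite _) (by rw [hCc])
  set F : Fin (n + 2) → Set X := fun t => closure (F₀ t) with hF
  have hFcl : ∀ t, IsClosed (F t) := fun t => isClosed_closure
  have hFsub : ∀ t, F t ⊆ C t := hF₀sub
  have hFc : (⋃ t, F t) = Set.univ := by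
    apply Set.eq_univ_of_univ_subset
    exact hF₀c.trans (Set.iUnion_mono fun t => subset_closure)
  obtain ⟨U, V, hUo, hVo, hAU, hBV, hUV, hUVc⟩ := hiness
    (fun i => F i.castSucc) (fun i => (C i.castSucc)ᶜ)
    (fun i => hFcl _) (fun i => (hCo _).isClosed_compl)
    (fun i => Set.disjoint_left.mpr fun x hx hx' => hx' (hFsub _ hx))
  have hUC : ∀ i, U i ⊆ C i.castSucc := by
    intro i x hx
    by_contra h
    exact Set.disjoint_left.mp (hUV i) hx (hBV i h)
  refine ⟨Fin.lastCases (C (Fin.last (n + 1)) ∩ ⋃ i, V i) U, ?_, ?_, ?_, ?_⟩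
  · intro t
    rcases Fin.eq_castSucc_or_eq_last t with ⟨u, rfl⟩ | rfl
    · simpa using hUo u
    · simpa using (hCo _).inter (isOpen_iUnion hVo)
  · intro t
    rcases Fin.eq_castSucc_or_eq_last t with ⟨u, rfl⟩ | rfl
    · simpa using hUC u
    · simpa using Set.inter_subset_left
  · apply Set.eq_univ_of_forall
    intro x
    by_cases hx : ∃ i, x ∈ U i
    · obtain ⟨i, hi⟩ := hx
      exact Set.mem_iUnion.2 ⟨i.castSucc, by simpa using hi⟩
    · push_neg at hx
      have hxV : x ∈ ⋃ i, V i := by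
        have : x ∈ ⋃ i, U i ∪ V i := hUVc ▸ Set.mem_univ x
        obtain ⟨i, hi⟩ := Set.mem_iUnion.1 this
        rcases hi with hi | hi
        · exact absurd hi (hx i)
        · exact Set.mem_iUnion.2 ⟨i, hi⟩
      have hxC : x ∈ C (Fin.last (n + 1)) := by
        have : x ∈ ⋃ t, F t := hFc ▸ Set.mem_univ x
        obtain ⟨t, ht⟩ := Set.mem_iUnion.1 this
        rcases Fin.eq_castSucc_or_eq_last t with ⟨u, rfl⟩ | rfl
        · exact absurd (hAU u ht) (hx u)
        · exact hFsub _ ht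
      exact Set.mem_iUnion.2 ⟨Fin.last (n + 1), by simp only [Fin.lastCases_last]; exact ⟨hxC, hxV⟩⟩
  · apply Set.eq_empty_iff_forall_notMem.2
    intro x hx
    have hlast : x ∈ C (Fin.last (n + 1)) ∩ ⋃ i, V i := by
      have := Set.mem_iInter.1 hx (Fin.last (n + 1))
      simpa using this
    obtain ⟨i, hi⟩ := Set.mem_iUnion.1 hlast.2
    have hxU : x ∈ U i := by
      have := Set.mem_iInter.1 hx i.castSucc
      simpa using this
    exact Set.disjoint_left.mp (hUV i) hxU hi

/-- Iterated shrinking: any finite indexed open cover can be shrunk so that every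
`n+2` members (with distinct indices) have empty intersection. -/
private lemma key_shrink {X : Type*} [MetricSpace X] (n k : ℕ)
    (hiness : ∀ A B : Fin (n + 1) → Set X,
      (∀ i, IsClosed (A i)) → (∀ i, IsClosed (B i)) → (∀ i, Disjoint (A i) (B i)) →
      ∃ U V : Fin (n + 1) → Set X,
        (∀ i, IsOpen (U i)) ∧ (∀ i, IsOpen (V i)) ∧
        (∀ i, A i ⊆ U i) ∧ (∀ i, B i ⊆ V i) ∧
        (∀ i, Disjoint (U i) (V i)) ∧ (⋃ i, U i ∪ V i) = Set.univ)
    (W : Fin k → Set X) (hWo : ∀ i, IsOpen (W i)) (hWc : (⋃ i, W i) = Set.univ)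
    (S : Finset (Finset (Fin k))) :
    ∃ V : Fin k → Set X, (∀ i, IsOpen (V i)) ∧ (∀ i, V i ⊆ W i) ∧
      (⋃ i, V i) = Set.univ ∧
      ∀ s ∈ S, s.card = n + 2 → (⋂ i ∈ s, V i) = ∅ := by
  classical
  induction S using Finset.induction with
  | empty => exact ⟨W, hWo, fun i => le_refl _, hWc, by simp⟩
  | @insert s S hns ih =>
    obtain ⟨V, hVo, hVW, hVc, hVS⟩ := ih
    by_cases hcard : s.card = n + 2
    · -- shrink once more to kill the intersection over `s`
      set e := s.orderIsoOfFin hcard with he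
      set C : Fin (n + 2) → Set X :=
        Fin.lastCases ((V (e (Fin.last (n + 1)) : Fin k)) ∪ ⋃ j, ⋃ (_ : j ∉ s), V j)
          (fun t => V (e t.castSucc : Fin k)) with hC
      have hCo : ∀ t, IsOpen (C t) := by
        intro t
        rcases Fin.eq_castSucc_or_eq_last t with ⟨u, rfl⟩ | rfl
        · simpa [hC] using hVo _
        · simpa [hC] using (hVo _).union (isOpen_iUnion fun j => isOpen_iUnion fun _ => hVo j)
      have hCc : (⋃ t, C t) = Set.univ := by
        apply Set.eq_univ_of_forall
        intro x
        have : x ∈ ⋃ j, V j := hVc ▸ Set.mem_univ x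
        obtain ⟨j, hj⟩ := Set.mem_iUnion.1 this
        by_cases hjs : j ∈ s
        · set t := e.symm ⟨j, hjs⟩ with ht
          have het : (e t : Fin k) = j := by simp [ht]
          rcases Fin.eq_castSucc_or_eq_last t with heq | heq
          · obtain ⟨u, hu⟩ := heq
            refine Set.mem_iUnion.2 ⟨u.castSucc, ?_⟩
            have : (e u.castSucc : Fin k) = j := by rw [← hu]; exact het
            simp only [hC, Fin.lastCases_castSucc, this]
            exact hj
          · refine Set.mem_iUnion.2 ⟨Fin.last (n + 1), ?_⟩
            have : (e (Fin.last (n + 1)) : Fin k) = j := by rw [← heq]; exact het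
            simp only [hC, Fin.lastCases_last, this]
            exact Or.inl hj
        · refine Set.mem_iUnion.2 ⟨Fin.last (n + 1), ?_⟩
          simp only [hC, Fin.lastCases_last]
          exact Or.inr (Set.mem_iUnion.2 ⟨j, Set.mem_iUnion.2 ⟨hjs, hj⟩⟩)
      obtain ⟨G, hGo, hGC, hGc, hGe⟩ := shrink_n2 n hiness C hCo hCc
      set V' : Fin k → Set X :=
        fun j => if h : j ∈ s then V j ∩ G (e.symm ⟨j, h⟩) else V j ∩ G (Fin.last (n + 1))
        with hV'
      have hV'V : ∀ j, V' j ⊆ V j := by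
        intro j
        by_cases h : j ∈ s <;> simp [hV', h]
      refine ⟨V', ?_, fun j => (hV'V j).trans (hVW j), ?_, ?_⟩
      · intro j
        by_cases h : j ∈ s <;> simp only [hV', dif_pos, dif_neg, h] <;>
          exact (hVo j).inter (hGo _)
      · apply Set.eq_univ_of_forall
        intro x
        have : x ∈ ⋃ t, G t := hGc ▸ Set.mem_univ x
        obtain ⟨t, ht⟩ := Set.mem_iUnion.1 this
        rcases Fin.eq_castSucc_or_eq_last t with ⟨u, rfl⟩ | rfl
        · have hxC : x ∈ V (e u.castSucc : Fin k) := by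
            have := hGC u.castSucc ht
            simpa [hC] using this
          set j : Fin k := (e u.castSucc : Fin k) with hj
          have hjs : j ∈ s := (e u.castSucc).2
          have hsym : e.symm ⟨j, hjs⟩ = u.castSucc := by
            apply e.injective
            simp [hj]
          refine Set.mem_iUnion.2 ⟨j, ?_⟩
          simp only [hV', dif_pos hjs, hsym]
          exact ⟨hxC, ht⟩
        · have hxC : x ∈ V (e (Fin.last (n + 1)) : Fin k) ∪ ⋃ j, ⋃ (_ : j ∉ s), V j := by
            have := hGC (Fin.last (n + 1)) ht
            simpa [hC] using this
          rcases hxC with hxC | hxC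
          · set j : Fin k := (e (Fin.last (n + 1)) : Fin k) with hj
            have hjs : j ∈ s := (e (Fin.last (n + 1))).2
            have hsym : e.symm ⟨j, hjs⟩ = Fin.last (n + 1) := by
              apply e.injective
              simp [hj]
            refine Set.mem_iUnion.2 ⟨j, ?_⟩
            simp only [hV', dif_pos hjs, hsym]
            exact ⟨hxC, ht⟩
          · obtain ⟨j, hjmem⟩ := Set.mem_iUnion.1 hxC
            obtain ⟨hjs, hjx⟩ := Set.mem_iUnion.1 hjmem
            refine Set.mem_iUnion.2 ⟨j, ?_⟩
            simp only [hV', dif_neg hjs]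
            exact ⟨hjx, ht⟩
      · intro s' hs' hcard'
        rcases Finset.mem_insert.1 hs' with rfl | hs'
        · -- the new subset
          apply Set.eq_empty_iff_forall_notMem.2
          intro x hx
          have hxG : ∀ t, x ∈ G t := by
            intro t
            have hjs : (e t : Fin k) ∈ s' := (e t).2
            have hxj : x ∈ V' (e t : Fin k) := by
              have := Set.mem_iInter₂.1 hx _ hjs
              exact this
            have hsym : e.symm ⟨(e t : Fin k), hjs⟩ = t := by
              apply e.injective
              simp
            rw [hV'] at hxj
            simp only [dif_pos hjs, hsym] at hxj
            exact hxj.2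
          exact Set.eq_empty_iff_forall_notMem.1 hGe x (Set.mem_iInter.2 hxG)
        · have h0 := hVS s' hs' hcard'
          apply Set.eq_empty_of_subset_empty
          rw [← h0]
          exact Set.iInter₂_mono fun j _ => hV'V j
    · refine ⟨V, hVo, hVW, hVc, ?_⟩
      intro s' hs' hcard'
      rcases Finset.mem_insert.1 hs' with rfl | hs'
      · exact absurd hcard' hcard
      · exact hVS s' hs' hcard'

/-- If a metric space `X` is `(n+1)`-inessential, then its covering dimension is at
most `n`: every finite open cover has a finite open refinement of order at most `n`. -/
theorem stmt_9 {X : Type*} [MetricSpace X] (n : ℕ)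
    (hiness : ∀ A B : Fin (n + 1) → Set X,
      (∀ i, IsClosed (A i)) → (∀ i, IsClosed (B i)) → (∀ i, Disjoint (A i) (B i)) →
      ∃ U V : Fin (n + 1) → Set X,
        (∀ i, IsOpen (U i)) ∧ (∀ i, IsOpen (V i)) ∧
        (∀ i, A i ⊆ U i) ∧ (∀ i, B i ⊆ V i) ∧
        (∀ i, Disjoint (U i) (V i)) ∧ (⋃ i, U i ∪ V i) = Set.univ)
    (𝒰 : Finset (Set X)) (h𝒰o : ∀ U ∈ 𝒰, IsOpen U)
    (h𝒰c : ⋃₀ (𝒰 : Set (Set X)) = Set.univ) :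
    ∃ 𝒱 : Finset (Set X),
      (∀ V ∈ 𝒱, IsOpen V) ∧ ⋃₀ (𝒱 : Set (Set X)) = Set.univ ∧
      (∀ V ∈ 𝒱, ∃ U ∈ 𝒰, V ⊆ U) ∧
      ∀ 𝒲 ⊆ 𝒱, n + 2 ≤ 𝒲.card → ⋂₀ (𝒲 : Set (Set X)) = ∅ := by
  classical
  set k := 𝒰.card with hk
  set W : Fin k → Set X := fun i => ((𝒰.equivFin.symm i : Set X)) with hW
  have hWmem : ∀ i, W i ∈ 𝒰 := fun i => (𝒰.equivFin.symm i).2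
  have hWo : ∀ i, IsOpen (W i) := fun i => h𝒰o _ (hWmem i)
  have hWc : (⋃ i, W i) = Set.univ := by
    apply Set.eq_univ_of_forall
    intro x
    have : x ∈ ⋃₀ (𝒰 : Set (Set X)) := h𝒰c ▸ Set.mem_univ x
    obtain ⟨U, hU, hxU⟩ := this
    refine Set.mem_iUnion.2 ⟨𝒰.equivFin ⟨U, hU⟩, ?_⟩
    simp only [hW, Equiv.symm_apply_apply]
    exact hxU
  obtain ⟨V, hVo, hVW, hVc, hVS⟩ := key_shrink n k hiness W hWo hWc Finset.univ
  refine ⟨Finset.image V Finset.univ, ?_, ?_, ?_, ?_⟩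
  · intro A hA
    obtain ⟨i, _, rfl⟩ := Finset.mem_image.1 hA
    exact hVo i
  · apply Set.eq_univ_of_forall
    intro x
    have : x ∈ ⋃ i, V i := hVc ▸ Set.mem_univ x
    obtain ⟨i, hi⟩ := Set.mem_iUnion.1 this
    exact ⟨V i, by simp [Finset.mem_image], hi⟩
  · intro A hA
    obtain ⟨i, _, rfl⟩ := Finset.mem_image.1 hA
    exact ⟨W i, hWmem i, hVW i⟩
  · intro 𝒲 h𝒲 hcard
    have hsur : ∀ A ∈ 𝒲, ∃ i : Fin k, V i = A := by
      intro A hA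
      obtain ⟨i, _, rfl⟩ := Finset.mem_image.1 (h𝒲 hA)
      exact ⟨i, rfl⟩
    obtain ⟨A0, hA0⟩ := Finset.card_pos.mp (by omega : 0 < 𝒲.card)
    obtain ⟨i0, _⟩ := hsur A0 hA0
    set g : Set X → Fin k := fun A => if h : ∃ i, V i = A then h.choose else i0 with hg
    have hgV : ∀ A ∈ 𝒲, V (g A) = A := by
      intro A hA
      simp only [hg, dif_pos (hsur A hA)]
      exact (hsur A hA).choose_spec
    have hginj : Set.InjOn g ↑𝒲 := by
      intro A hA B hB hAB
      rw [← hgV A hA, ← hgV B hB, hAB]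
    have hcard0 : n + 2 ≤ (𝒲.image g).card := by
      rw [Finset.card_image_of_injOn hginj]
      exact hcard
    obtain ⟨s, hs_sub, hs_card⟩ := Finset.exists_subset_card_eq hcard0
    have hempty := hVS s (Finset.mem_univ s) hs_card
    apply Set.eq_empty_of_subset_empty
    rw [← hempty]
    intro x hx
    apply Set.mem_iInter₂.2
    intro i hi
    obtain ⟨A, hA, rfl⟩ := Finset.mem_image.1 (hs_sub hi)
    rw [hgV A hA]
    exact hx A hA
end

section
/- If the n-sphere S^n is an absolute extensor for a metric space X, then every finite open cover of X has a finite open refinement of order at most n (i.e., the covering dimension of X is at most n). -/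
/-!
View `Sⁿ` as the boundary of the `(n+1)`-simplex `Δ`, seen from its barycenter. For an open cover
`U₀, …, U_{n+1}`, a subordinate partition of unity `φ` maps `X` to `Δ`, and sends the closed set
where some `φᵢ` vanishes into `∂Δ`. Projecting radially onto `∂Δ ≅ Sⁿ` there and extending to all
of `X` by the extensor property gives `g : X → Sⁿ`. With `λᵢ` the barycentric coordinates centred
at the barycenter, the sets `{λᵢ ∘ g > 0}` shrink the `Uᵢ`, still cover `X`, and have empty
intersection since `∑ λᵢ = 0`. An arbitrary finite open cover is handled one `(n+2)`-element
subfamily at a time, merging the other members into the subfamily before shrinking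
(Hemmingsen's argument).
-/

open Set

/-- Coordinates `λ₀, …, λ_{n+1}` identifying `ℝⁿ⁺¹` with the hyperplane `∑ wᵢ = 0` of `ℝⁿ⁺²`,
i.e. the barycentric coordinates of the standard simplex shifted so that its barycenter is `0`. -/
noncomputable def simplexCoord (n : ℕ) :
    Fin (n + 2) → EuclideanSpace ℝ (Fin (n + 1)) →L[ℝ] ℝ :=
  Fin.lastCases (-∑ k, EuclideanSpace.proj k) EuclideanSpace.proj

section SimplexCoord

variable {n : ℕ}

@[simp]
lemma simplexCoord_castSucc (j : Fin (n + 1)) (y : EuclideanSpace ℝ (Fin (n + 1))) :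
    simplexCoord n j.castSucc y = y j := by
  simp [simplexCoord]

@[simp]
lemma simplexCoord_last (y : EuclideanSpace ℝ (Fin (n + 1))) :
    simplexCoord n (Fin.last _) y = -∑ k, y k := by
  simp [simplexCoord]

lemma sum_simplexCoord (y : EuclideanSpace ℝ (Fin (n + 1))) : ∑ i, simplexCoord n i y = 0 := by
  simp [Fin.sum_univ_castSucc]

lemma exists_simplexCoord_pos {y : EuclideanSpace ℝ (Fin (n + 1))} (hy : y ≠ 0) :
    ∃ i, 0 < simplexCoord n i y := by
  by_contra! h
  have h0 := (Finset.sum_eq_zero_iff_of_nonpos fun i _ => h i).1 (sum_simplexCoord y)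
  exact hy (by ext k; simpa using h0 k.castSucc (Finset.mem_univ _))

lemma simplexCoord_toLp_of_sum_eq_zero {w : Fin (n + 2) → ℝ} (hw : ∑ i, w i = 0)
    (i : Fin (n + 2)) :
    simplexCoord n i (WithLp.toLp 2 fun k => w k.castSucc) = w i := by
  induction i using Fin.lastCases with
  | last => rw [Fin.sum_univ_castSucc] at hw; rw [simplexCoord_last]; linarith
  | cast j => simp

end SimplexCoord

def AbsoluteExtensor (X K : Type*) [TopologicalSpace X] [TopologicalSpace K] : Prop :=
  ∀ P : Set X, IsClosed P → ∀ f : X → K, ContinuousOn f P →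
    ∃ g : X → K, Continuous g ∧ EqOn g f P

section Shrinking

variable {X : Type*} [TopologicalSpace X]

structure IsOpenShrinking {ι : Type*} (V U : ι → Set X) : Prop where
  isOpen : ∀ i, IsOpen (V i)
  subset : ∀ i, V i ⊆ U i
  iUnion_eq : ⋃ i, V i = univ

def HasShrinkingWithEmptyInter (X κ : Type*) [TopologicalSpace X] : Prop :=
  ∀ U : κ → Set X, (∀ i, IsOpen (U i)) → ⋃ i, U i = univ →
    ∃ V, IsOpenShrinking V U ∧ ⋂ i, V i = ∅

lemma AbsoluteExtensor.exists_continuous_extension_normalize {E : Type*} [NormedAddCommGroup E]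
    [NormedSpace ℝ E] [Nontrivial E] (hX : AbsoluteExtensor X (Metric.sphere (0 : E) 1))
    {P : Set X} (hP : IsClosed P) {F : X → E} (hF : Continuous F) (hF0 : ∀ x ∈ P, F x ≠ 0) :
    ∃ g : X → Metric.sphere (0 : E) 1, Continuous g ∧ ∀ x ∈ P, (g x : E) = ‖F x‖⁻¹ • F x := by
  classical
  obtain ⟨p⟩ : Nonempty (Metric.sphere (0 : E) 1) :=
    (NormedSpace.sphere_nonempty.2 zero_le_one).to_subtype
  let f : X → Metric.sphere (0 : E) 1 := fun x =>
    if hx : F x = 0 then p else ⟨‖F x‖⁻¹ • F x, by simp [norm_smul, hx]⟩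
  have hfP : ∀ x ∈ P, (f x : E) = ‖F x‖⁻¹ • F x := fun x hx => by simp [f, hF0 x hx]
  have hf : ContinuousOn f P := by
    rw [Topology.IsInducing.subtypeVal.continuousOn_iff]
    refine ContinuousOn.congr ?_ hfP
    exact (hF.norm.continuousOn.inv₀ fun x hx => norm_ne_zero_iff.2 (hF0 x hx)).smul
      hF.continuousOn
  obtain ⟨g, hg, hgf⟩ := hX P hP f hf
  exact ⟨g, hg, fun x hx => by rw [hgf hx, hfP x hx]⟩

lemma exists_continuous_simplexCoord_eq {n : ℕ} (φ : Fin (n + 2) → X → ℝ)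
    (hφ : ∀ i, Continuous (φ i)) (hφ1 : ∀ x, ∑ i, φ i x = 1) :
    ∃ F : X → EuclideanSpace ℝ (Fin (n + 1)), Continuous F ∧
      ∀ x i, simplexCoord n i (F x) = φ i x - ((n : ℝ) + 2)⁻¹ := by
  refine ⟨fun x => WithLp.toLp 2 fun k => φ k.castSucc x - ((n : ℝ) + 2)⁻¹,
    (PiLp.continuous_toLp 2 _).comp (continuous_pi fun k => (hφ _).sub continuous_const),
    fun x => simplexCoord_toLp_of_sum_eq_zero (w := fun i => φ i x - ((n : ℝ) + 2)⁻¹) ?_⟩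
  rw [Finset.sum_sub_distrib, hφ1, Finset.sum_const, Finset.card_univ, Fintype.card_fin,
    nsmul_eq_mul]
  push_cast
  field_simp
  ring

lemma isOpenShrinking_setOf_simplexCoord_pos {n : ℕ} {U : Fin (n + 2) → Set X}
    {g : X → EuclideanSpace ℝ (Fin (n + 1))} (hg : Continuous g) (hg0 : ∀ x, g x ≠ 0)
    (hgU : ∀ i x, 0 < simplexCoord n i (g x) → x ∈ U i) :
    IsOpenShrinking (fun i => {x | 0 < simplexCoord n i (g x)}) U ∧
      ⋂ i, {x | 0 < simplexCoord n i (g x)} = ∅ := by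
  refine ⟨⟨fun i => isOpen_lt continuous_const ((simplexCoord n i).continuous.comp hg),
    hgU, eq_univ_of_forall fun x => mem_iUnion.2 (exists_simplexCoord_pos (hg0 x))⟩, ?_⟩
  refine eq_empty_of_forall_notMem fun x hx => ?_
  have hpos : 0 < ∑ i, simplexCoord n i (g x) :=
    Finset.sum_pos (fun i _ => mem_iInter.1 hx i) Finset.univ_nonempty
  exact hpos.ne' (sum_simplexCoord _)

theorem AbsoluteExtensor.hasShrinkingWithEmptyInter [NormalSpace X] {n : ℕ}
    (hX : AbsoluteExtensor X (Metric.sphere (0 : EuclideanSpace ℝ (Fin (n + 1))) 1)) :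
    HasShrinkingWithEmptyInter X (Fin (n + 2)) := by
  intro U hUo hUc
  obtain ⟨φ, hφU⟩ := PartitionOfUnity.exists_isSubordinate_of_locallyFinite isClosed_univ U hUo
    (locallyFinite_of_finite U) hUc.symm.subset
  have hφ1 (x : X) : ∑ i, φ i x = 1 := by
    simpa [finsum_eq_sum_of_fintype] using φ.sum_eq_one (mem_univ x)
  have hφU' (i : Fin (n + 2)) (x : X) (hx : φ i x ≠ 0) : x ∈ U i :=
    hφU i (subset_tsupport _ hx)
  obtain ⟨F, hF, hFφ⟩ :=
    exists_continuous_simplexCoord_eq (fun i => φ i) (fun i => (φ i).continuous) hφ1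
  have hFneg (x : X) (i : Fin (n + 2)) (hx : φ i x = 0) : simplexCoord n i (F x) < 0 := by
    rw [hFφ, hx]
    simp only [zero_sub, Left.neg_neg_iff, inv_pos]
    positivity
  let P : Set X := ⋃ i, (φ i) ⁻¹' {0}
  have hP : IsClosed P :=
    isClosed_iUnion_of_finite fun i => isClosed_singleton.preimage (φ i).continuous
  have hF0 : ∀ x ∈ P, F x ≠ 0 := by
    intro x hx h0
    obtain ⟨i, hi⟩ := mem_iUnion.1 hx
    simpa [h0] using hFneg x i hi
  obtain ⟨g, hg, hgF⟩ := hX.exists_continuous_extension_normalize hP hF hF0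
  refine ⟨_, isOpenShrinking_setOf_simplexCoord_pos (continuous_subtype_val.comp hg)
    (fun x => ne_zero_of_mem_unit_sphere (g x)) fun i x hx => hφU' i x fun h0 => ?_⟩
  have hxP : x ∈ P := mem_iUnion.2 ⟨i, h0⟩
  simp only [Function.comp_apply, hgF x hxP, map_smul, smul_eq_mul] at hx
  exact (hFneg x i h0).not_gt (pos_of_mul_pos_right hx (by positivity))

lemma IsOpenShrinking.trans {ι : Type*} {W V U : ι → Set X} (hWV : IsOpenShrinking W V)
    (hVU : IsOpenShrinking V U) : IsOpenShrinking W U :=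
  ⟨hWV.isOpen, fun i => (hWV.subset i).trans (hVU.subset i), hWV.iUnion_eq⟩

lemma HasShrinkingWithEmptyInter.of_equiv {κ κ' : Type*} (e : κ ≃ κ')
    (h : HasShrinkingWithEmptyInter X κ') : HasShrinkingWithEmptyInter X κ := by
  intro U hUo hUc
  obtain ⟨V, hV, hV0⟩ := h (fun i => U (e.symm i)) (fun i => hUo _)
    (by rwa [e.symm.surjective.iUnion_comp U])
  refine ⟨fun i => V (e i),
    ⟨fun i => hV.isOpen _, fun i => by simpa using hV.subset (e i), ?_⟩, ?_⟩
  · rw [e.surjective.iUnion_comp V, hV.iUnion_eq]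
  · rwa [e.surjective.iInter_comp V]

lemma exists_isOpenShrinking_biInter_eq_empty {ι : Type*} {U : ι → Set X}
    (hUo : ∀ i, IsOpen (U i)) (hUc : ⋃ i, U i = univ) {A : Finset ι} (hA : A.Nonempty)
    (h : HasShrinkingWithEmptyInter X A) :
    ∃ V, IsOpenShrinking V U ∧ ⋂ i ∈ A, V i = ∅ := by
  -- merge the members outside `A` into every member of `A`
  let W := ⋃ (i) (_ : i ∉ A), U i
  have hWo : IsOpen W := isOpen_biUnion fun i _ => hUo i
  obtain ⟨V, hV, hV0⟩ := h (fun a => U a ∪ W) (fun a => (hUo a).union hWo) <| by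
    refine eq_univ_of_forall fun x => ?_
    obtain ⟨i, hi⟩ := mem_iUnion.1 (hUc.symm ▸ mem_univ x)
    by_cases hiA : i ∈ A
    · exact mem_iUnion.2 ⟨⟨i, hiA⟩, Or.inl hi⟩
    · exact mem_iUnion.2 ⟨⟨_, hA.choose_spec⟩, Or.inr (mem_biUnion hiA hi)⟩
  refine ⟨fun i => U i ∩ ⋂ (hi : i ∈ A), V ⟨i, hi⟩,
    ⟨fun i => (hUo i).inter (isOpen_iInter_of_finite fun _ => hV.isOpen _),
      fun i => inter_subset_left, eq_univ_of_forall fun x => ?_⟩, ?_⟩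
  · obtain ⟨a, ha⟩ := mem_iUnion.1 (hV.iUnion_eq.symm ▸ mem_univ x)
    rcases hV.subset a ha with hxa | hxW
    · exact mem_iUnion.2 ⟨a, hxa, mem_iInter.2 fun _ => ha⟩
    · obtain ⟨i, hiA, hi⟩ := mem_iUnion₂.1 hxW
      exact mem_iUnion.2 ⟨i, hi, mem_iInter.2 fun hi' => (hiA hi').elim⟩
  · refine eq_empty_of_forall_notMem fun x hx => ?_
    have hxV : x ∈ ⋂ a, V a :=
      mem_iInter.2 fun a => mem_iInter.1 (mem_iInter₂.1 hx a a.2).2 a.2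
    rwa [hV0] at hxV

lemma exists_isOpenShrinking_forall_biInter_eq_empty {ι : Type*} [Finite ι] {k : ℕ}
    (hk : 0 < k) (h : HasShrinkingWithEmptyInter X (Fin k)) {U : ι → Set X}
    (hUo : ∀ i, IsOpen (U i)) (hUc : ⋃ i, U i = univ) :
    ∃ V, IsOpenShrinking V U ∧ ∀ A : Finset ι, k ≤ A.card → ⋂ i ∈ A, V i = ∅ := by
  classical
  have : Fintype ι := Fintype.ofFinite ι
  have hS : ∀ S : Finset (Finset ι), (∀ A ∈ S, A.card = k) →
      ∃ V, IsOpenShrinking V U ∧ ∀ A ∈ S, ⋂ i ∈ A, V i = ∅ := by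
    intro S
    induction S using Finset.induction_on with
    | empty => exact fun _ => ⟨U, ⟨hUo, fun _ => subset_rfl, hUc⟩, by simp⟩
    | insert A S _ ih =>
      intro hcard
      obtain ⟨V, hV, hV0⟩ := ih fun B hB => hcard B (Finset.mem_insert_of_mem hB)
      have hA := hcard A (Finset.mem_insert_self A S)
      obtain ⟨V', hV', hV'0⟩ := exists_isOpenShrinking_biInter_eq_empty hV.isOpen hV.iUnion_eq
        (Finset.card_pos.1 (hA ▸ hk)) (h.of_equiv (A.equivFin.trans (finCongr hA)))
      refine ⟨V', hV'.trans hV, fun B hB => ?_⟩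
      rcases Finset.mem_insert.1 hB with rfl | hB
      · exact hV'0
      · exact subset_eq_empty (biInter_mono subset_rfl fun i _ => hV'.subset i) (hV0 B hB)
  obtain ⟨V, hV, hV0⟩ :=
    hS (Finset.univ.powersetCard k) fun A hA => (Finset.mem_powersetCard.1 hA).2
  refine ⟨V, hV, fun A hA => ?_⟩
  obtain ⟨B, hBA, hB⟩ := Finset.exists_subset_card_eq hA
  exact subset_eq_empty (biInter_subset_biInter_left hBA)
    (hV0 B (Finset.mem_powersetCard.2 ⟨Finset.subset_univ B, hB⟩))

end Shrinking

/-- If the `n`-sphere is an absolute extensor for a metric space `X`, then the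
covering dimension of `X` is at most `n`. -/
theorem stmt_10 {X : Type*} [MetricSpace X] (n : ℕ)
    (hAE : ∀ P : Set X, IsClosed P →
      ∀ f : X → Metric.sphere (0 : EuclideanSpace ℝ (Fin (n + 1))) 1,
        ContinuousOn f P →
          ∃ g : X → Metric.sphere (0 : EuclideanSpace ℝ (Fin (n + 1))) 1,
            Continuous g ∧ Set.EqOn g f P)
    (𝒰 : Finset (Set X)) (h𝒰o : ∀ U ∈ 𝒰, IsOpen U)
    (h𝒰c : ⋃₀ (𝒰 : Set (Set X)) = Set.univ) :
    ∃ 𝒱 : Finset (Set X),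
      (∀ V ∈ 𝒱, IsOpen V) ∧ ⋃₀ (𝒱 : Set (Set X)) = Set.univ ∧
      (∀ V ∈ 𝒱, ∃ U ∈ 𝒰, V ⊆ U) ∧
      ∀ 𝒲 ⊆ 𝒱, n + 2 ≤ 𝒲.card → ⋂₀ (𝒲 : Set (Set X)) = ∅ := by
  classical
  obtain ⟨V, hV, hV0⟩ := exists_isOpenShrinking_forall_biInter_eq_empty (Nat.succ_pos _)
    (AbsoluteExtensor.hasShrinkingWithEmptyInter hAE) (U := fun U : 𝒰 => (U : Set X))
    (fun U => h𝒰o U U.2) (by simpa [sUnion_eq_iUnion] using h𝒰c)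
  refine ⟨Finset.univ.image V, ?_, ?_, ?_, fun 𝒲 h𝒲 hcard => ?_⟩
  · exact Finset.forall_mem_image.2 fun U _ => hV.isOpen U
  · simpa using hV.iUnion_eq
  · exact Finset.forall_mem_image.2 fun U _ => ⟨U, U.2, hV.subset U⟩
  · obtain ⟨B, -, rfl⟩ := Finset.subset_image_iff.1 h𝒲
    simpa using hV0 B (hcard.trans Finset.card_image_le)
end
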